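/- Suppose h ∈ 𝓗. Then for every ϑ ∈ Θ with ϑ ≥ ϑ₀ + δ, the Kullback–Leibler divergence J is differentiable at ϑ with J′(ϑ) = (S + h + λ₀)·ln(1 + S/λ₀) − S, and this value is strictly positive. -/

import Mathlib

open MeasureTheory Real Set Filter

/-- The cusp signal shape: `ψ(x) = (x/δ)^κ` for `0 < x < δ`, `1` for `x ≥ δ`, `0` for `x ≤ 0`. -/
noncomputable def psi (δ κ : ℝ) (x : ℝ) : ℝ :=
  if δ ≤ x then 1 else if 0 < x then (x / δ) ^ κ else 0

/-- Theoretical intensity `λ(ϑ, t) = S ψ(t − ϑ) + λ₀`. -/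
noncomputable def lamT (S lam0 δ κ : ℝ) (ϑ t : ℝ) : ℝ :=
  S * psi δ κ (t - ϑ) + lam0

/-- Real intensity `λ*(ϑ₀, t) = (S + h) ψ(t − ϑ₀) + λ₀`. -/
noncomputable def lamR (S h lam0 δ κ : ℝ) (ϑ₀ t : ℝ) : ℝ :=
  (S + h) * psi δ κ (t - ϑ₀) + lam0

/-- The Kullback–Leibler divergence `J(ϑ)`. -/
noncomputable def JKL (S h lam0 δ κ τ ϑ₀ : ℝ) (ϑ : ℝ) : ℝ :=
  ∫ t in (min ϑ ϑ₀)..τ,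
    (lamT S lam0 δ κ ϑ t / lamR S h lam0 δ κ ϑ₀ t - 1 -
      Real.log (lamT S lam0 δ κ ϑ t / lamR S h lam0 δ κ ϑ₀ t)) *
      lamR S h lam0 δ κ ϑ₀ t

/-!
Split `J(x)`, for `ϑ₀ < x`, at `x` and `x + δ`, and write `k(l, y) = (l/y − 1 − ln(l/y)) y` for the
integrand. On `[ϑ₀, x]` the theoretical intensity is `λ₀`, on `[x + δ, τ]` both intensities are on
their plateaus, and on `[x, x + δ]`, once `λ*` is replaced by its plateau value `S + h + λ₀`, the
integral no longer depends on `x`; this gives a function of `x` with derivative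
`k(λ₀, λ*(x)) − k(S + λ₀, S + h + λ₀)`. The replacement error vanishes for `x ≥ ϑ₀ + δ`. For
`x < ϑ₀ + δ` it lives on `[x, ϑ₀ + δ]`, where `k` is Lipschitz in `y` and `ψ(u) ≥ u/δ` (as `κ ≤ 1`)
makes `S + h + λ₀ − λ*` at most a multiple of `ϑ₀ + δ − x`; so the error is `O((x − ϑ)²)` around
any `ϑ ≥ ϑ₀ + δ` and does not contribute to `J′(ϑ)`.
-/

section Psi

variable {δ κ x : ℝ}

lemma psi_of_nonpos (hδ : 0 < δ) (hx : x ≤ 0) : psi δ κ x = 0 := by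
  rw [psi, if_neg (by linarith), if_neg (by linarith)]

lemma psi_of_le (hx : δ ≤ x) : psi δ κ x = 1 := by
  rw [psi, if_pos hx]

lemma psi_nonneg (x : ℝ) : 0 ≤ psi δ κ x := by
  unfold psi
  split_ifs with h₁ h₂
  · exact zero_le_one
  · exact rpow_nonneg (div_nonneg h₂.le (by linarith)) κ
  · exact le_rfl

lemma psi_le_one (hκ : 0 ≤ κ) (x : ℝ) : psi δ κ x ≤ 1 := by
  unfold psi
  split_ifs with h₁ h₂
  · exact le_rfl
  · exact rpow_le_one (div_nonneg h₂.le (by linarith))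
      ((div_le_one (by linarith)).2 (by linarith)) hκ
  · exact zero_le_one

lemma div_le_psi (hδ : 0 < δ) (hκ : κ ≤ 1) (hx : x ≤ δ) : x / δ ≤ psi δ κ x := by
  unfold psi
  split_ifs with h₁ h₂
  · exact (div_le_one hδ).2 hx
  · simpa using rpow_le_rpow_of_exponent_ge (div_pos h₂ hδ) ((div_le_one hδ).2 hx) hκ
  · exact div_nonpos_of_nonpos_of_nonneg (not_lt.1 h₂) hδ.le

lemma continuous_psi (hδ : 0 < δ) (hκ : 0 < κ) : Continuous (psi δ κ) := by
  have h : psi δ κ = fun x => (max 0 (min x δ) / δ) ^ κ := by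
    funext x
    unfold psi
    split_ifs with h₁ h₂
    · rw [min_eq_right h₁, max_eq_right hδ.le, div_self hδ.ne', one_rpow]
    · rw [min_eq_left (not_le.1 h₁).le, max_eq_right h₂.le]
    · rw [min_eq_left (by linarith), max_eq_left (not_lt.1 h₂), zero_div, zero_rpow hκ.ne']
  rw [h]
  exact ((continuous_const.max (continuous_id.min continuous_const)).div_const δ).rpow_const
    fun _ => Or.inr hκ.le

end Psi

noncomputable def klDensity (l y : ℝ) : ℝ := (l / y - 1 - log (l / y)) * y

lemma klDensity_eq {l y : ℝ} (hl : 0 < l) (hy : 0 < y) :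
    klDensity l y = l - y - (log l - log y) * y := by
  rw [klDensity, log_div hl.ne' hy.ne']
  field_simp

lemma Continuous.klDensity {X : Type*} [TopologicalSpace X] {f g : X → ℝ} (hf : Continuous f)
    (hg : Continuous g) (hf0 : ∀ x, f x ≠ 0) (hg0 : ∀ x, g x ≠ 0) :
    Continuous fun x => _root_.klDensity (f x) (g x) := by
  have hq : Continuous fun x => f x / g x := hf.div hg hg0
  exact ((hq.sub continuous_const).sub (hq.log fun x => div_ne_zero (hf0 x) (hg0 x))).mul hg

lemma klDensity_sub_klDensity_add {l s y : ℝ} (hl : 0 < l) (hls : 0 < s + l) (hy : 0 < y) :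
    klDensity l y - klDensity (s + l) y = y * log (1 + s / l) - s := by
  rw [klDensity_eq hl hy, klDensity_eq hls hy, show 1 + s / l = (s + l) / l by field_simp; ring,
    log_div hls.ne' hl.ne']
  ring

/-- `∂k/∂y = ln y − ln l`, which is at most `ln B − ln m` when `l` and `y` lie in `[m, B]`. -/
lemma abs_klDensity_sub_le {m B l a b : ℝ} (hm : 0 < m) (hl : l ∈ Icc m B) (ha : m ≤ a)
    (hab : a ≤ b) (hb : b ≤ B) :
    |klDensity l b - klDensity l a| ≤ (log B - log m) * (b - a) := by
  have hl0 : 0 < l := hm.trans_le hl.1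
  have hderiv : ∀ y ∈ Icc a b,
      HasDerivWithinAt (fun y => l - y - (log l - log y) * y) (log y - log l) (Icc a b) y := by
    intro y hy
    have hy0 : y ≠ 0 := (hm.trans_le (ha.trans hy.1)).ne'
    have h := ((hasDerivAt_const y l).sub (hasDerivAt_id y)).sub
      (((hasDerivAt_log hy0).const_sub (log l)).mul (hasDerivAt_id y))
    refine (h.congr_deriv ?_).hasDerivWithinAt
    simp only [id]
    field_simp
    ring
  have hbound : ∀ y ∈ Icc a b, ‖log y - log l‖ ≤ log B - log m := by
    intro y hy
    have hy0 : 0 < y := hm.trans_le (ha.trans hy.1)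
    have := log_le_log hm (ha.trans hy.1)
    have := log_le_log hy0 (hy.2.trans hb)
    have := log_le_log hm hl.1
    have := log_le_log hl0 hl.2
    rw [Real.norm_eq_abs, abs_le]
    constructor <;> linarith
  have := (convex_Icc a b).norm_image_sub_le_of_norm_hasDerivWithin_le hderiv hbound
    (left_mem_Icc.2 hab) (right_mem_Icc.2 hab)
  rw [klDensity_eq hl0 (hm.trans_le (ha.trans hab)), klDensity_eq hl0 (hm.trans_le ha)]
  simpa [Real.norm_eq_abs, abs_of_nonneg (sub_nonneg.2 hab)] using this

section Intensities

variable {S h lam0 δ κ ϑ ϑ₀ t : ℝ}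

lemma lamT_mem_Icc (hS : 0 ≤ S) (hκ : 0 ≤ κ) : lamT S lam0 δ κ ϑ t ∈ Icc lam0 (S + lam0) := by
  have h₀ := psi_nonneg (δ := δ) (κ := κ) (t - ϑ)
  have h₁ := psi_le_one (δ := δ) hκ (t - ϑ)
  constructor <;> unfold lamT <;> nlinarith

lemma lamR_mem_Icc (hSh : 0 ≤ S + h) (hκ : 0 ≤ κ) :
    lamR S h lam0 δ κ ϑ₀ t ∈ Icc lam0 (S + h + lam0) := by
  have h₀ := psi_nonneg (δ := δ) (κ := κ) (t - ϑ₀)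
  have h₁ := psi_le_one (δ := δ) hκ (t - ϑ₀)
  constructor <;> unfold lamR <;> nlinarith

lemma lamT_of_le (hδ : 0 < δ) (ht : t ≤ ϑ) : lamT S lam0 δ κ ϑ t = lam0 := by
  rw [lamT, psi_of_nonpos hδ (by linarith), mul_zero, zero_add]

lemma lamT_of_add_le (ht : ϑ + δ ≤ t) : lamT S lam0 δ κ ϑ t = S + lam0 := by
  rw [lamT, psi_of_le (by linarith), mul_one]

lemma lamR_of_add_le (ht : ϑ₀ + δ ≤ t) : lamR S h lam0 δ κ ϑ₀ t = S + h + lam0 := by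
  rw [lamR, psi_of_le (by linarith), mul_one]

lemma sub_lamR_le (hSh : 0 ≤ S + h) (hδ : 0 < δ) (hκ : κ ≤ 1) (ht : t ≤ ϑ₀ + δ) :
    S + h + lam0 - lamR S h lam0 δ κ ϑ₀ t ≤ (S + h) / δ * (ϑ₀ + δ - t) := by
  have hψ := div_le_psi (κ := κ) hδ hκ (show t - ϑ₀ ≤ δ by linarith)
  calc S + h + lam0 - lamR S h lam0 δ κ ϑ₀ t = (S + h) * (1 - psi δ κ (t - ϑ₀)) := by
        rw [lamR]; ring
    _ ≤ (S + h) * (1 - (t - ϑ₀) / δ) := by gcongr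
    _ = (S + h) / δ * (ϑ₀ + δ - t) := by field_simp; ring

lemma continuous_lamT (hδ : 0 < δ) (hκ : 0 < κ) : Continuous (lamT S lam0 δ κ ϑ) :=
  (continuous_const.mul ((continuous_psi hδ hκ).comp (continuous_sub_right ϑ))).add
    continuous_const

lemma continuous_lamR (hδ : 0 < δ) (hκ : 0 < κ) : Continuous (lamR S h lam0 δ κ ϑ₀) :=
  (continuous_const.mul ((continuous_psi hδ hκ).comp (continuous_sub_right ϑ₀))).add
    continuous_const

end Intensities

section Contamination

variable {S lam0 h : ℝ}

lemma log_one_add_div_pos (hS : 0 < S) (hlam0 : 0 < lam0) : 0 < log (1 + S / lam0) :=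
  log_pos (by linarith [div_pos hS hlam0])

lemma add_pos_of_div_log_sub_lt (hS : 0 < S) (hlam0 : 0 < lam0)
    (hH : S / log (1 + S / lam0) - S - lam0 < h) : 0 < S + h := by
  have hL := log_one_add_div_pos hS hlam0
  have hlt : log (1 + S / lam0) < S / lam0 := by
    linarith [log_lt_sub_one_of_pos (by linarith [div_pos hS hlam0]) (by
      linarith [div_pos hS hlam0] : 1 + S / lam0 ≠ 1)]
  have : lam0 < S / log (1 + S / lam0) := by
    rw [lt_div_iff₀ hL]
    rwa [lt_div_iff₀ hlam0, mul_comm] at hlt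
  linarith

lemma mul_log_one_add_div_sub_pos (hS : 0 < S) (hlam0 : 0 < lam0)
    (hH : S / log (1 + S / lam0) - S - lam0 < h) :
    0 < (S + h + lam0) * log (1 + S / lam0) - S := by
  have := (div_lt_iff₀ (log_one_add_div_pos hS hlam0)).1 (show S / log (1 + S / lam0) <
    S + h + lam0 by linarith)
  linarith

end Contamination

section Divergence

variable {S h lam0 δ κ τ ϑ ϑ₀ x : ℝ}

/-- `J(x)` for `ϑ₀ ≤ x` with `λ*` replaced by its plateau value `S + h + λ₀` on `[x, τ]`; the
three terms are the integrals over `[ϑ₀, x]`, `[x, x + δ]` and `[x + δ, τ]`. -/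
noncomputable def JKLApprox (S h lam0 δ κ τ ϑ₀ x : ℝ) : ℝ :=
  (∫ t in ϑ₀..x, klDensity lam0 (lamR S h lam0 δ κ ϑ₀ t)) +
    (∫ u in (0 : ℝ)..δ, klDensity (S * psi δ κ u + lam0) (S + h + lam0)) +
    klDensity (S + lam0) (S + h + lam0) * (τ - (x + δ))

lemma continuous_klDensity_lamT (hS : 0 ≤ S) (hlam0 : 0 < lam0) (hδ : 0 < δ) (hκ : 0 < κ)
    {y : ℝ → ℝ} (hy : Continuous y) (hy0 : ∀ t, 0 < y t) :
    Continuous fun t => klDensity (lamT S lam0 δ κ x t) (y t) :=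
  (continuous_lamT hδ hκ).klDensity hy
    (fun _ => (hlam0.trans_le (lamT_mem_Icc hS hκ.le).1).ne') fun t => (hy0 t).ne'

lemma continuous_klDensity_lamT_lamR (hS : 0 ≤ S) (hSh : 0 ≤ S + h) (hlam0 : 0 < lam0)
    (hδ : 0 < δ) (hκ : 0 < κ) :
    Continuous fun t => klDensity (lamT S lam0 δ κ x t) (lamR S h lam0 δ κ ϑ₀ t) :=
  continuous_klDensity_lamT hS hlam0 hδ hκ (continuous_lamR hδ hκ)
    fun _ => hlam0.trans_le (lamR_mem_Icc hSh hκ.le).1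

lemma JKL_sub_JKLApprox (hS : 0 ≤ S) (hSh : 0 ≤ S + h) (hlam0 : 0 < lam0) (hδ : 0 < δ)
    (hκ : 0 < κ) (hx : ϑ₀ ≤ x) (hxτ : x + δ ≤ τ) :
    JKL S h lam0 δ κ τ ϑ₀ x - JKLApprox S h lam0 δ κ τ ϑ₀ x =
      ∫ t in x..x + δ, (klDensity (lamT S lam0 δ κ x t) (lamR S h lam0 δ κ ϑ₀ t) -
        klDensity (lamT S lam0 δ κ x t) (S + h + lam0)) := by
  have hF := continuous_klDensity_lamT_lamR (x := x) (ϑ₀ := ϑ₀) hS hSh hlam0 hδ hκ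
  have hFA := continuous_klDensity_lamT (x := x) hS hlam0 hδ hκ
    (continuous_const (y := S + h + lam0)) fun _ => by linarith
  have hleft : ∫ t in ϑ₀..x, klDensity (lamT S lam0 δ κ x t) (lamR S h lam0 δ κ ϑ₀ t) =
      ∫ t in ϑ₀..x, klDensity lam0 (lamR S h lam0 δ κ ϑ₀ t) := by
    refine intervalIntegral.integral_congr fun t ht => ?_
    rw [uIcc_of_le hx] at ht
    simp only [lamT_of_le hδ ht.2]
  have hright : ∫ t in x + δ..τ, klDensity (lamT S lam0 δ κ x t) (lamR S h lam0 δ κ ϑ₀ t) =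
      klDensity (S + lam0) (S + h + lam0) * (τ - (x + δ)) := by
    rw [intervalIntegral.integral_congr (g := fun _ => klDensity (S + lam0) (S + h + lam0))
      fun t ht => ?_]
    · simp only [intervalIntegral.integral_const, smul_eq_mul, mul_comm]
    rw [uIcc_of_le hxτ] at ht
    simp only [lamT_of_add_le ht.1, lamR_of_add_le (show ϑ₀ + δ ≤ t by linarith [ht.1])]
  have hmid : ∫ t in x..x + δ, klDensity (lamT S lam0 δ κ x t) (S + h + lam0) =
      ∫ u in (0 : ℝ)..δ, klDensity (S * psi δ κ u + lam0) (S + h + lam0) := by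
    simpa [lamT] using intervalIntegral.integral_comp_sub_right (a := x) (b := x + δ)
      (fun u => klDensity (S * psi δ κ u + lam0) (S + h + lam0)) x
  change (∫ t in min x ϑ₀..τ, klDensity (lamT S lam0 δ κ x t) (lamR S h lam0 δ κ ϑ₀ t)) - _ = _
  rw [min_eq_right hx, ← intervalIntegral.integral_add_adjacent_intervals
      (hF.intervalIntegrable ϑ₀ x) (hF.intervalIntegrable x τ),
    ← intervalIntegral.integral_add_adjacent_intervals (hF.intervalIntegrable x (x + δ))
      (hF.intervalIntegrable (x + δ) τ), hleft, hright,
    intervalIntegral.integral_sub (hF.intervalIntegrable _ _) (hFA.intervalIntegrable _ _), hmid,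
    JKLApprox]
  ring

lemma JKL_eq_JKLApprox (hS : 0 ≤ S) (hSh : 0 ≤ S + h) (hlam0 : 0 < lam0) (hδ : 0 < δ)
    (hκ : 0 < κ) (hx : ϑ₀ + δ ≤ x) (hxτ : x + δ ≤ τ) :
    JKL S h lam0 δ κ τ ϑ₀ x = JKLApprox S h lam0 δ κ τ ϑ₀ x := by
  rw [← sub_eq_zero, JKL_sub_JKLApprox hS hSh hlam0 hδ hκ (by linarith) hxτ,
    intervalIntegral.integral_congr (g := fun _ => 0) fun t ht => ?_,
    intervalIntegral.integral_zero]
  rw [uIcc_of_le (by linarith)] at ht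
  simp only [lamR_of_add_le (show ϑ₀ + δ ≤ t by linarith [ht.1]), sub_self]

lemma abs_JKL_sub_JKLApprox_le (hS : 0 ≤ S) (hSh : 0 ≤ S + h) (hlam0 : 0 < lam0) (hδ : 0 < δ)
    (hκ : κ ∈ Ioc 0 1) (hx : ϑ₀ ≤ x) (hxδ : x ≤ ϑ₀ + δ) (hxτ : x + δ ≤ τ) :
    |JKL S h lam0 δ κ τ ϑ₀ x - JKLApprox S h lam0 δ κ τ ϑ₀ x| ≤
      (log (S + h + lam0 + S) - log lam0) * ((S + h) / δ) * (ϑ₀ + δ - x) ^ 2 := by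
  set M := log (S + h + lam0 + S) - log lam0
  have hD : Continuous fun t => klDensity (lamT S lam0 δ κ x t) (lamR S h lam0 δ κ ϑ₀ t) -
      klDensity (lamT S lam0 δ κ x t) (S + h + lam0) :=
    (continuous_klDensity_lamT_lamR hS hSh hlam0 hδ hκ.1).sub
      (continuous_klDensity_lamT hS hlam0 hδ hκ.1 continuous_const fun _ => by linarith)
  have hzero : ∫ t in ϑ₀ + δ..x + δ, (klDensity (lamT S lam0 δ κ x t) (lamR S h lam0 δ κ ϑ₀ t) -
      klDensity (lamT S lam0 δ κ x t) (S + h + lam0)) = 0 := by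
    rw [intervalIntegral.integral_congr (g := fun _ => 0) fun t ht => ?_,
      intervalIntegral.integral_zero]
    rw [uIcc_of_le (by linarith)] at ht
    simp only [lamR_of_add_le ht.1, sub_self]
  have hbound : ∀ t ∈ uIoc x (ϑ₀ + δ),
      ‖klDensity (lamT S lam0 δ κ x t) (lamR S h lam0 δ κ ϑ₀ t) -
        klDensity (lamT S lam0 δ κ x t) (S + h + lam0)‖ ≤ M * ((S + h) / δ) * (ϑ₀ + δ - x) := by
    intro t ht
    rw [uIoc_of_le hxδ] at ht
    have hT := lamT_mem_Icc (lam0 := lam0) (δ := δ) (ϑ := x) (t := t) hS hκ.1.le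
    have hR := lamR_mem_Icc (lam0 := lam0) (δ := δ) (ϑ₀ := ϑ₀) (t := t) hSh hκ.1.le
    have hM : 0 ≤ M := sub_nonneg.2 (log_le_log hlam0 (by linarith))
    calc _ = |klDensity (lamT S lam0 δ κ x t) (S + h + lam0) -
          klDensity (lamT S lam0 δ κ x t) (lamR S h lam0 δ κ ϑ₀ t)| := by
          rw [Real.norm_eq_abs, abs_sub_comm]
      _ ≤ M * (S + h + lam0 - lamR S h lam0 δ κ ϑ₀ t) :=
          abs_klDensity_sub_le hlam0 ⟨hT.1, by linarith [hT.2]⟩ hR.1 hR.2 (by linarith)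
      _ ≤ M * ((S + h) / δ * (ϑ₀ + δ - t)) := by
          gcongr
          exact sub_lamR_le hSh hδ hκ.2 ht.2
      _ ≤ M * ((S + h) / δ) * (ϑ₀ + δ - x) := by
          rw [← mul_assoc]
          gcongr
          linarith [ht.1]
  rw [JKL_sub_JKLApprox hS hSh hlam0 hδ hκ.1 hx hxτ,
    ← intervalIntegral.integral_add_adjacent_intervals (hD.intervalIntegrable x (ϑ₀ + δ))
      (hD.intervalIntegrable _ _), hzero, add_zero, ← Real.norm_eq_abs]
  calc _ ≤ M * ((S + h) / δ) * (ϑ₀ + δ - x) * |ϑ₀ + δ - x| :=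
        intervalIntegral.norm_integral_le_of_norm_le_const hbound
    _ = M * ((S + h) / δ) * (ϑ₀ + δ - x) ^ 2 := by
        rw [abs_of_nonneg (by linarith)]
        ring

lemma JKL_sub_JKLApprox_isBigO (hS : 0 ≤ S) (hSh : 0 ≤ S + h) (hlam0 : 0 < lam0) (hδ : 0 < δ)
    (hκ : κ ∈ Ioc 0 1) (hϑ : ϑ₀ + δ ≤ ϑ) (hϑτ : ϑ + δ < τ) :
    (JKL S h lam0 δ κ τ ϑ₀ - JKLApprox S h lam0 δ κ τ ϑ₀) =O[nhds ϑ]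
      fun x => ‖x - ϑ‖ ^ 2 := by
  refine Asymptotics.IsBigO.of_bound
    ((log (S + h + lam0 + S) - log lam0) * ((S + h) / δ)) ?_
  filter_upwards [Ioo_mem_nhds (show ϑ₀ < ϑ by linarith) (show ϑ < τ - δ by linarith)]
    with x hx
  have hK : 0 ≤ (log (S + h + lam0 + S) - log lam0) * ((S + h) / δ) :=
    mul_nonneg (sub_nonneg.2 (log_le_log hlam0 (by linarith))) (by positivity)
  rw [Pi.sub_apply]
  rcases le_total (ϑ₀ + δ) x with hxδ | hxδ
  · rw [JKL_eq_JKLApprox hS hSh hlam0 hδ hκ.1 hxδ (by linarith [hx.2]), sub_self, norm_zero]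
    positivity
  · calc _ ≤ (log (S + h + lam0 + S) - log lam0) * ((S + h) / δ) * (ϑ₀ + δ - x) ^ 2 :=
          abs_JKL_sub_JKLApprox_le hS hSh hlam0 hδ hκ hx.1.le hxδ (by linarith [hx.2])
      _ ≤ (log (S + h + lam0 + S) - log lam0) * ((S + h) / δ) * ‖‖x - ϑ‖ ^ 2‖ := by
          rw [norm_pow, norm_norm, Real.norm_eq_abs, sq_abs]
          exact mul_le_mul_of_nonneg_left (by nlinarith) hK

lemma hasDerivAt_JKLApprox (hSh : 0 ≤ S + h) (hlam0 : 0 < lam0) (hδ : 0 < δ) (hκ : 0 < κ)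
    (x : ℝ) :
    HasDerivAt (JKLApprox S h lam0 δ κ τ ϑ₀)
      (klDensity lam0 (lamR S h lam0 δ κ ϑ₀ x) - klDensity (S + lam0) (S + h + lam0)) x := by
  have hG : Continuous fun t => klDensity lam0 (lamR S h lam0 δ κ ϑ₀ t) :=
    continuous_const.klDensity (continuous_lamR hδ hκ) (fun _ => hlam0.ne')
      fun _ => (hlam0.trans_le (lamR_mem_Icc hSh hκ.le).1).ne'
  have := (((hG.integral_hasStrictDerivAt ϑ₀ x).hasDerivAt.add_const
    (∫ u in (0 : ℝ)..δ, klDensity (S * psi δ κ u + lam0) (S + h + lam0))).add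
    ((((hasDerivAt_id x).add_const δ).const_sub τ).const_mul
      (klDensity (S + lam0) (S + h + lam0))))
  exact this.congr_deriv (by ring)

end Divergence

theorem stmt_1_general (S lam0 δ τ κ α β ϑ₀ h : ℝ)
    (hS : 0 < S) (hlam0 : 0 < lam0) (hδ : 0 < δ)
    (hκ : κ ∈ Set.Ioo (0 : ℝ) (1 / 2))
    (hΘ : Set.Ioo (α - δ) (β + δ) ⊆ Set.Ioo 0 (τ - δ))
    (hH : S / Real.log (1 + S / lam0) - S - lam0 < h) :
    ∀ ϑ ∈ Set.Ioo (α - δ) (β + δ), ϑ₀ + δ ≤ ϑ →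
      HasDerivAt (JKL S h lam0 δ κ τ ϑ₀)
        ((S + h + lam0) * Real.log (1 + S / lam0) - S) ϑ ∧
        0 < (S + h + lam0) * Real.log (1 + S / lam0) - S := by
  intro ϑ hϑ hϑ₀ϑ
  have hSh : 0 < S + h := add_pos_of_div_log_sub_lt hS hlam0 hH
  have hκIoc : κ ∈ Ioc 0 1 := ⟨hκ.1, by linarith [hκ.2]⟩
  have hrem := ((JKL_sub_JKLApprox_isBigO (τ := τ) hS.le hSh.le hlam0 hδ hκIoc hϑ₀ϑ
    (by linarith [(hΘ hϑ).2])).hasFDerivAt one_lt_two).hasDerivAt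
  have happrox := hasDerivAt_JKLApprox (τ := τ) (ϑ₀ := ϑ₀) hSh.le hlam0 hδ hκ.1 ϑ
  rw [lamR_of_add_le hϑ₀ϑ, klDensity_sub_klDensity_add hlam0 (by linarith) (by linarith)]
    at happrox
  exact ⟨by simpa using hrem.add happrox, mul_log_one_add_div_sub_pos hS hlam0 hH⟩

theorem stmt_1 (S lam0 δ τ κ α β ϑ₀ h : ℝ)
    (hS : 0 < S) (hlam0 : 0 < lam0) (hδ : 0 < δ) (hτ : 0 < τ)
    (hκ : κ ∈ Set.Ioo (0 : ℝ) (1 / 2)) (hαβ : α < β)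
    (hΘ : Set.Ioo (α - δ) (β + δ) ⊆ Set.Ioo 0 (τ - δ))
    (hϑ₀ : ϑ₀ ∈ Set.Ioo α β)
    (hH : S / Real.log (1 + S / lam0) - S - lam0 < h) :
    ∀ ϑ ∈ Set.Ioo (α - δ) (β + δ), ϑ₀ + δ ≤ ϑ →
      HasDerivAt (JKL S h lam0 δ κ τ ϑ₀)
        ((S + h + lam0) * Real.log (1 + S / lam0) - S) ϑ ∧
        0 < (S + h + lam0) * Real.log (1 + S / lam0) - S :=
  stmt_1_general S lam0 δ τ κ α β ϑ₀ h hS hlam0 hδ hκ hΘ hH
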